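/- For all compactly supported smooth functions u, v : ℝ → ℝ, one has ∫_ℝ [(4u − v)·(𝔓₀ δH₂)₁ + (−u + (2/9)v)·(𝔓₀ δH₂)₂] dx = 0, where (𝔓₀ δH₂)₁, (𝔓₀ δH₂)₂ are the two components of 𝔓₀ applied to (δH₂/δu, δH₂/δv). That is, the Poisson bracket {ℋ₁, ℋ₂} associated with 𝔓₀ vanishes: ℋ₁ and ℋ₂ are in involution with respect to 𝔓₀. -/

import Mathlib

open MeasureTheory

/-- `δH₂/δu = −8u² + (40/9)uv − (5/9)v² + 2u_xx − (5/9)v_xx`. -/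
noncomputable def dH2u (u v : ℝ → ℝ) (x : ℝ) : ℝ :=
  -8 * (u x) ^ 2 + (40 / 9) * u x * v x - (5 / 9) * (v x) ^ 2
    + 2 * iteratedDeriv 2 u x - (5 / 9) * iteratedDeriv 2 v x

/-- `δH₂/δv = (20/9)u² − (10/9)uv + (7/54)v² − (5/9)u_xx + (4/27)v_xx`. -/
noncomputable def dH2v (u v : ℝ → ℝ) (x : ℝ) : ℝ :=
  (20 / 9) * (u x) ^ 2 - (10 / 9) * u x * v x + (7 / 54) * (v x) ^ 2
    - (5 / 9) * iteratedDeriv 2 u x + (4 / 27) * iteratedDeriv 2 v x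

/-- First component of 𝔓₀ applied to a pair `(f, g)`: `f''' − 2u f' − u' f`. -/
noncomputable def P0fst (u : ℝ → ℝ) (f : ℝ → ℝ) (x : ℝ) : ℝ :=
  iteratedDeriv 3 f x - 2 * u x * deriv f x - deriv u x * f x

/-- Second component of 𝔓₀ applied to a pair `(f, g)`: `−9g''' + 12v g' + 6v' g`. -/
noncomputable def P0snd (v : ℝ → ℝ) (g : ℝ → ℝ) (x : ℝ) : ℝ :=
  -9 * iteratedDeriv 3 g x + 12 * v x * deriv g x + 6 * deriv v x * g x

noncomputable def involGu (u v : ℝ → ℝ) (x : ℝ) : ℝ :=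
  (((((-8 : ℝ) * ((u x) * (u x)) + (40 / 9 : ℝ) * ((u x) * (v x))) + (-5 / 9 : ℝ) * ((v x) * (v x))) + (2 : ℝ) * (iteratedDeriv 2 u x)) + (-5 / 9 : ℝ) * (iteratedDeriv 2 v x))

noncomputable def involD1u (u v : ℝ → ℝ) (x : ℝ) : ℝ :=
  (((((-8 : ℝ) * (((deriv u x) * (u x) + (u x) * (deriv u x))) + (40 / 9 : ℝ) * (((deriv u x) * (v x) + (u x) * (deriv v x)))) + (-5 / 9 : ℝ) * (((deriv v x) * (v x) + (v x) * (deriv v x)))) + (2 : ℝ) * (iteratedDeriv 3 u x)) + (-5 / 9 : ℝ) * (iteratedDeriv 3 v x))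

noncomputable def involD2u (u v : ℝ → ℝ) (x : ℝ) : ℝ :=
  (((((-8 : ℝ) * ((((iteratedDeriv 2 u x) * (u x) + (deriv u x) * (deriv u x)) + ((deriv u x) * (deriv u x) + (u x) * (iteratedDeriv 2 u x)))) + (40 / 9 : ℝ) * ((((iteratedDeriv 2 u x) * (v x) + (deriv u x) * (deriv v x)) + ((deriv u x) * (deriv v x) + (u x) * (iteratedDeriv 2 v x))))) + (-5 / 9 : ℝ) * ((((iteratedDeriv 2 v x) * (v x) + (deriv v x) * (deriv v x)) + ((deriv v x) * (deriv v x) + (v x) * (iteratedDeriv 2 v x))))) + (2 : ℝ) * (iteratedDeriv 4 u x)) + (-5 / 9 : ℝ) * (iteratedDeriv 4 v x))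

noncomputable def involD3u (u v : ℝ → ℝ) (x : ℝ) : ℝ :=
  (((((-8 : ℝ) * (((((iteratedDeriv 3 u x) * (u x) + (iteratedDeriv 2 u x) * (deriv u x)) + ((iteratedDeriv 2 u x) * (deriv u x) + (deriv u x) * (iteratedDeriv 2 u x))) + (((iteratedDeriv 2 u x) * (deriv u x) + (deriv u x) * (iteratedDeriv 2 u x)) + ((deriv u x) * (iteratedDeriv 2 u x) + (u x) * (iteratedDeriv 3 u x))))) + (40 / 9 : ℝ) * (((((iteratedDeriv 3 u x) * (v x) + (iteratedDeriv 2 u x) * (deriv v x)) + ((iteratedDeriv 2 u x) * (deriv v x) + (deriv u x) * (iteratedDeriv 2 v x))) + (((iteratedDeriv 2 u x) * (deriv v x) + (deriv u x) * (iteratedDeriv 2 v x)) + ((deriv u x) * (iteratedDeriv 2 v x) + (u x) * (iteratedDeriv 3 v x)))))) + (-5 / 9 : ℝ) * (((((iteratedDeriv 3 v x) * (v x) + (iteratedDeriv 2 v x) * (deriv v x)) + ((iteratedDeriv 2 v x) * (deriv v x) + (deriv v x) * (iteratedDeriv 2 v x))) + (((iteratedDeriv 2 v x) * (deriv v x) +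 (deriv v x) * (iteratedDeriv 2 v x)) + ((deriv v x) * (iteratedDeriv 2 v x) + (v x) * (iteratedDeriv 3 v x)))))) + (2 : ℝ) * (iteratedDeriv 5 u x)) + (-5 / 9 : ℝ) * (iteratedDeriv 5 v x))

noncomputable def involGv (u v : ℝ → ℝ) (x : ℝ) : ℝ :=
  (((((20 / 9 : ℝ) * ((u x) * (u x)) + (-10 / 9 : ℝ) * ((u x) * (v x))) + (7 / 54 : ℝ) * ((v x) * (v x))) + (-5 / 9 : ℝ) * (iteratedDeriv 2 u x)) + (4 / 27 : ℝ) * (iteratedDeriv 2 v x))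

noncomputable def involD1v (u v : ℝ → ℝ) (x : ℝ) : ℝ :=
  (((((20 / 9 : ℝ) * (((deriv u x) * (u x) + (u x) * (deriv u x))) + (-10 / 9 : ℝ) * (((deriv u x) * (v x) + (u x) * (deriv v x)))) + (7 / 54 : ℝ) * (((deriv v x) * (v x) + (v x) * (deriv v x)))) + (-5 / 9 : ℝ) * (iteratedDeriv 3 u x)) + (4 / 27 : ℝ) * (iteratedDeriv 3 v x))

noncomputable def involD2v (u v : ℝ → ℝ) (x : ℝ) : ℝ :=
  (((((20 / 9 : ℝ) * ((((iteratedDeriv 2 u x) * (u x) + (deriv u x) * (deriv u x)) + ((deriv u x) * (deriv u x) + (u x) * (iteratedDeriv 2 u x)))) + (-10 / 9 : ℝ) * ((((iteratedDeriv 2 u x) * (v x) + (deriv u x) * (deriv v x)) + ((deriv u x) * (deriv v x) + (u x) * (iteratedDeriv 2 v x))))) + (7 / 54 : ℝ) * ((((iteratedDeriv 2 v x) * (v x) + (deriv v x) * (deriv v x)) + ((deriv v x) * (deriv v x) + (v x) * (iteratedDeriv 2 v x))))) + (-5 / 9 : ℝ) * (iteratedDeriv 4 u x)) + (4 / 27 :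 ℝ) * (iteratedDeriv 4 v x))

noncomputable def involD3v (u v : ℝ → ℝ) (x : ℝ) : ℝ :=
  (((((20 / 9 : ℝ) * (((((iteratedDeriv 3 u x) * (u x) + (iteratedDeriv 2 u x) * (deriv u x)) + ((iteratedDeriv 2 u x) * (deriv u x) + (deriv u x) * (iteratedDeriv 2 u x))) + (((iteratedDeriv 2 u x) * (deriv u x) + (deriv u x) * (iteratedDeriv 2 u x)) + ((deriv u x) * (iteratedDeriv 2 u x) + (u x) * (iteratedDeriv 3 u x))))) + (-10 / 9 : ℝ) * (((((iteratedDeriv 3 u x) * (v x) + (iteratedDeriv 2 u x) * (deriv v x)) + ((iteratedDeriv 2 u x) * (deriv v x) + (deriv u x) * (iteratedDeriv 2 v x))) + (((iteratedDeriv 2 u x) * (deriv v x) + (deriv u x) * (iteratedDeriv 2 v x)) + ((deriv u x) * (iteratedDeriv 2 v x) + (u x) * (iteratedDeriv 3 v x)))))) + (7 / 54 : ℝ) * (((((iteratedDeriv 3 v x) * (v x) + (iteratedDeriv 2 v x) * (deriv v x)) + ((iteratedDeriv 2 v x) * (deriv v x) + (deriv v x) * (iteratedDeriv 2 v x))) +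 (((iteratedDeriv 2 v x) * (deriv v x) + (deriv v x) * (iteratedDeriv 2 v x)) + ((deriv v x) * (iteratedDeriv 2 v x) + (v x) * (iteratedDeriv 3 v x)))))) + (-5 / 9 : ℝ) * (iteratedDeriv 5 u x)) + (4 / 27 : ℝ) * (iteratedDeriv 5 v x))

noncomputable def involFF (u v : ℝ → ℝ) (x : ℝ) : ℝ :=
  ((((((((((((((((((((((((7 / 54 : ℝ) * ((iteratedDeriv 2 v x) * (iteratedDeriv 2 v x)) + (-7 / 27 : ℝ) * ((deriv v x) * (iteratedDeriv 3 v x))) + (7 / 27 : ℝ) * ((v x) * (iteratedDeriv 4 v x))) + (80 / 81 : ℝ) * (((v x) * (v x)) * (iteratedDeriv 2 v x))) + (35 / 162 : ℝ) * ((((v x) * (v x)) * (v x)) * (v x))) + (-8 / 9 : ℝ) * ((iteratedDeriv 4 u x) * (v x))) + (8 / 9 : ℝ) * ((iteratedDeriv 3 u x) * (deriv v x))) + (-8 / 9 : ℝ) * ((iteratedDeriv 2 u x) * (iteratedDeriv 2 v x))) + (-100 / 27 : ℝ) * (((iteratedDeriv 2 u x) * (v x)) * (v x))) + (3 / 2 :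 ℝ) * ((iteratedDeriv 2 u x) * (iteratedDeriv 2 u x))) + (8 / 9 : ℝ) * ((deriv u x) * (iteratedDeriv 3 v x))) + (-3 : ℝ) * ((deriv u x) * (iteratedDeriv 3 u x))) + (-10 / 9 : ℝ) * (((deriv u x) * (deriv u x)) * (v x))) + (-8 / 9 : ℝ) * ((u x) * (iteratedDeriv 4 v x))) + (-65 / 9 : ℝ) * (((u x) * (v x)) * (iteratedDeriv 2 v x))) + (-95 / 27 : ℝ) * ((((u x) * (v x)) * (v x)) * (v x))) + (3 : ℝ) * ((u x) * (iteratedDeriv 4 u x))) + (230 / 9 : ℝ) * (((u x) * (iteratedDeriv 2 u x)) * (v x))) + (10 / 9 : ℝ) * (((u x) * (deriv u x)) * (deriv v x))) + (110 / 9 : ℝ) * (((u x) * (u x)) * (iteratedDeriv 2 v x))) + (550 / 27 : ℝ) * ((((u x) * (u x)) * (v x)) * (v x))) + (-40 : ℝ) * (((u x) * (u x)) * (iteratedDeriv 2 u x))) + (-440 / 9 : ℝ) * ((((u x) * (u x)) * (u x)) * (v x))) + (40 : ℝ) * ((((u x) * (u x)) * (u x)) * (u x)))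

noncomputable def involDF (u v : ℝ → ℝ) (x : ℝ) : ℝ :=
  ((((((((((((((((((((((((7 / 54 : ℝ) * (((iteratedDeriv 3 v x) * (iteratedDeriv 2 v x) + (iteratedDeriv 2 v x) * (iteratedDeriv 3 v x))) + (-7 / 27 : ℝ) * (((iteratedDeriv 2 v x) * (iteratedDeriv 3 v x) + (deriv v x) * (iteratedDeriv 4 v x)))) + (7 / 27 : ℝ) * (((deriv v x) * (iteratedDeriv 4 v x) + (v x) * (iteratedDeriv 5 v x)))) + (80 / 81 : ℝ) * (((((deriv v x) * (v x) + (v x) * (deriv v x))) * (iteratedDeriv 2 v x) + ((v x) * (v x)) * (iteratedDeriv 3 v x)))) + (35 / 162 : ℝ) * (((((((deriv v x) * (v x) + (v x) * (deriv v x))) * (v x) + ((v x) * (v x)) * (deriv v x))) * (v x) + (((v x) * (v x)) * (v x)) * (deriv v x)))) + (-8 / 9 : ℝ) * (((iteratedDeriv 5 u x) * (v x) + (iteratedDeriv 4 u x) * (deriv v x)))) + (8 / 9 : ℝ) * (((iteratedDeriv 4 u x) * (deriv v x) + (iteratedDeriv 3 u x) * (iteratedDeriv 2 v x)))) + (-8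 / 9 : ℝ) * (((iteratedDeriv 3 u x) * (iteratedDeriv 2 v x) + (iteratedDeriv 2 u x) * (iteratedDeriv 3 v x)))) + (-100 / 27 : ℝ) * (((((iteratedDeriv 3 u x) * (v x) + (iteratedDeriv 2 u x) * (deriv v x))) * (v x) + ((iteratedDeriv 2 u x) * (v x)) * (deriv v x)))) + (3 / 2 : ℝ) * (((iteratedDeriv 3 u x) * (iteratedDeriv 2 u x) + (iteratedDeriv 2 u x) * (iteratedDeriv 3 u x)))) + (8 / 9 : ℝ) * (((iteratedDeriv 2 u x) * (iteratedDeriv 3 v x) + (deriv u x) * (iteratedDeriv 4 v x)))) + (-3 : ℝ) * (((iteratedDeriv 2 u x) * (iteratedDeriv 3 u x) + (deriv u x) * (iteratedDeriv 4 u x)))) + (-10 / 9 : ℝ) * (((((iteratedDeriv 2 u x) * (deriv u x) + (deriv u x) * (iteratedDeriv 2 u x))) * (v x) + ((deriv u x) * (deriv u x)) * (deriv v x)))) + (-8 / 9 : ℝ) * (((deriv u x) * (iteratedDeriv 4 v x) + (u x) * (iteratedDeriv 5 v x)))) + (-65 / 9 : ℝ) * (((((deriv u x) * (v x) + (u x)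 * (deriv v x))) * (iteratedDeriv 2 v x) + ((u x) * (v x)) * (iteratedDeriv 3 v x)))) + (-95 / 27 : ℝ) * (((((((deriv u x) * (v x) + (u x) * (deriv v x))) * (v x) + ((u x) * (v x)) * (deriv v x))) * (v x) + (((u x) * (v x)) * (v x)) * (deriv v x)))) + (3 : ℝ) * (((deriv u x) * (iteratedDeriv 4 u x) + (u x) * (iteratedDeriv 5 u x)))) + (230 / 9 : ℝ) * (((((deriv u x) * (iteratedDeriv 2 u x) + (u x) * (iteratedDeriv 3 u x))) * (v x) + ((u x) * (iteratedDeriv 2 u x)) * (deriv v x)))) + (10 / 9 : ℝ) * (((((deriv u x) * (deriv u x) + (u x) * (iteratedDeriv 2 u x))) * (deriv v x) + ((u x) * (deriv u x)) * (iteratedDeriv 2 v x)))) + (110 / 9 : ℝ) * (((((deriv u x) * (u x) + (u x) * (deriv u x))) * (iteratedDeriv 2 v x) + ((u x) * (u x)) * (iteratedDeriv 3 v x)))) + (550 / 27 : ℝ) * (((((((deriv u x) * (u x) + (u x) * (deriv u x))) * (v x) + ((u x) * (u x)) * (deriv v x))) * (v x) + (((u x) * (u x)) * (v x)) * (deriv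 v x)))) + (-40 : ℝ) * (((((deriv u x) * (u x) + (u x) * (deriv u x))) * (iteratedDeriv 2 u x) + ((u x) * (u x)) * (iteratedDeriv 3 u x)))) + (-440 / 9 : ℝ) * (((((((deriv u x) * (u x) + (u x) * (deriv u x))) * (u x) + ((u x) * (u x)) * (deriv u x))) * (v x) + (((u x) * (u x)) * (u x)) * (deriv v x)))) + (40 : ℝ) * (((((((deriv u x) * (u x) + (u x) * (deriv u x))) * (u x) + ((u x) * (u x)) * (deriv u x))) * (u x) + (((u x) * (u x)) * (u x)) * (deriv u x))))


private lemma involJet {f : ℝ → ℝ} (hf : ContDiff ℝ (⊤ : ℕ∞) f) (k : ℕ) (x : ℝ) :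
    HasDerivAt (iteratedDeriv k f) (iteratedDeriv (k + 1) f x) x := by
  rw [iteratedDeriv_succ]
  exact ((hf.differentiable_iteratedDeriv k (by exact_mod_cast lt_top_iff_ne_top.2 (by simp))) x).hasDerivAt

private lemma involTsupport (f : ℝ → ℝ) (k : ℕ) :
    tsupport (iteratedDeriv k f) ⊆ tsupport f := by
  induction k with
  | zero => simp [iteratedDeriv_zero]
  | succ n ih =>
    rw [iteratedDeriv_succ]
    exact (closure_minimal (support_deriv_subset) isClosed_closure).trans ih

private lemma involJetZero {f : ℝ → ℝ} {x : ℝ} (hx : x ∉ tsupport f) (k : ℕ) :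
    iteratedDeriv k f x = 0 :=
  image_eq_zero_of_notMem_tsupport (fun h => hx (involTsupport f k h))

private lemma involHD_Gu (u v : ℝ → ℝ) (hu : ContDiff ℝ (⊤ : ℕ∞) u) (hv : ContDiff ℝ (⊤ : ℕ∞) v) (x : ℝ) :
    HasDerivAt (involGu u v) (involD1u u v x) x := by
  have hu0 : HasDerivAt u (deriv u x) x := by
    have h := involJet hu 0 x
    simpa [iteratedDeriv_zero, iteratedDeriv_one] using h
  have hu1 : HasDerivAt (deriv u) (iteratedDeriv 2 u x) x := by
    have h := involJet hu 1 x
    simpa [iteratedDeriv_one] using h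
  have hu2 : HasDerivAt (iteratedDeriv 2 u) (iteratedDeriv 3 u x) x := involJet hu 2 x
  have hv0 : HasDerivAt v (deriv v x) x := by
    have h := involJet hv 0 x
    simpa [iteratedDeriv_zero, iteratedDeriv_one] using h
  have hv1 : HasDerivAt (deriv v) (iteratedDeriv 2 v x) x := by
    have h := involJet hv 1 x
    simpa [iteratedDeriv_one] using h
  have hv2 : HasDerivAt (iteratedDeriv 2 v) (iteratedDeriv 3 v x) x := involJet hv 2 x
  exact (((((HasDerivAt.const_mul (-8 : ℝ) (hu0.mul hu0)).add (HasDerivAt.const_mul (40 / 9 : ℝ) (hu0.mul hv0))).add (HasDerivAt.const_mul (-5 / 9 : ℝ) (hv0.mul hv0))).add (HasDerivAt.const_mul (2 : ℝ) hu2)).add (HasDerivAt.const_mul (-5 / 9 : ℝ) hv2))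

private lemma involHD_D1u (u v : ℝ → ℝ) (hu : ContDiff ℝ (⊤ : ℕ∞) u) (hv : ContDiff ℝ (⊤ : ℕ∞) v) (x : ℝ) :
    HasDerivAt (involD1u u v) (involD2u u v x) x := by
  have hu0 : HasDerivAt u (deriv u x) x := by
    have h := involJet hu 0 x
    simpa [iteratedDeriv_zero, iteratedDeriv_one] using h
  have hu1 : HasDerivAt (deriv u) (iteratedDeriv 2 u x) x := by
    have h := involJet hu 1 x
    simpa [iteratedDeriv_one] using h
  have hu2 : HasDerivAt (iteratedDeriv 2 u) (iteratedDeriv 3 u x) x := involJet hu 2 x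
  have hu3 : HasDerivAt (iteratedDeriv 3 u) (iteratedDeriv 4 u x) x := involJet hu 3 x
  have hv0 : HasDerivAt v (deriv v x) x := by
    have h := involJet hv 0 x
    simpa [iteratedDeriv_zero, iteratedDeriv_one] using h
  have hv1 : HasDerivAt (deriv v) (iteratedDeriv 2 v x) x := by
    have h := involJet hv 1 x
    simpa [iteratedDeriv_one] using h
  have hv2 : HasDerivAt (iteratedDeriv 2 v) (iteratedDeriv 3 v x) x := involJet hv 2 x
  have hv3 : HasDerivAt (iteratedDeriv 3 v) (iteratedDeriv 4 v x) x := involJet hv 3 x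
  exact (((((HasDerivAt.const_mul (-8 : ℝ) ((hu1.mul hu0).add (hu0.mul hu1))).add (HasDerivAt.const_mul (40 / 9 : ℝ) ((hu1.mul hv0).add (hu0.mul hv1)))).add (HasDerivAt.const_mul (-5 / 9 : ℝ) ((hv1.mul hv0).add (hv0.mul hv1)))).add (HasDerivAt.const_mul (2 : ℝ) hu3)).add (HasDerivAt.const_mul (-5 / 9 : ℝ) hv3))

private lemma involHD_D2u (u v : ℝ → ℝ) (hu : ContDiff ℝ (⊤ : ℕ∞) u) (hv : ContDiff ℝ (⊤ : ℕ∞) v) (x : ℝ) :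
    HasDerivAt (involD2u u v) (involD3u u v x) x := by
  have hu0 : HasDerivAt u (deriv u x) x := by
    have h := involJet hu 0 x
    simpa [iteratedDeriv_zero, iteratedDeriv_one] using h
  have hu1 : HasDerivAt (deriv u) (iteratedDeriv 2 u x) x := by
    have h := involJet hu 1 x
    simpa [iteratedDeriv_one] using h
  have hu2 : HasDerivAt (iteratedDeriv 2 u) (iteratedDeriv 3 u x) x := involJet hu 2 x
  have hu3 : HasDerivAt (iteratedDeriv 3 u) (iteratedDeriv 4 u x) x := involJet hu 3 x
  have hu4 : HasDerivAt (iteratedDeriv 4 u) (iteratedDeriv 5 u x) x := involJet hu 4 x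
  have hv0 : HasDerivAt v (deriv v x) x := by
    have h := involJet hv 0 x
    simpa [iteratedDeriv_zero, iteratedDeriv_one] using h
  have hv1 : HasDerivAt (deriv v) (iteratedDeriv 2 v x) x := by
    have h := involJet hv 1 x
    simpa [iteratedDeriv_one] using h
  have hv2 : HasDerivAt (iteratedDeriv 2 v) (iteratedDeriv 3 v x) x := involJet hv 2 x
  have hv3 : HasDerivAt (iteratedDeriv 3 v) (iteratedDeriv 4 v x) x := involJet hv 3 x
  have hv4 : HasDerivAt (iteratedDeriv 4 v) (iteratedDeriv 5 v x) x := involJet hv 4 x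
  exact (((((HasDerivAt.const_mul (-8 : ℝ) (((hu2.mul hu0).add (hu1.mul hu1)).add ((hu1.mul hu1).add (hu0.mul hu2)))).add (HasDerivAt.const_mul (40 / 9 : ℝ) (((hu2.mul hv0).add (hu1.mul hv1)).add ((hu1.mul hv1).add (hu0.mul hv2))))).add (HasDerivAt.const_mul (-5 / 9 : ℝ) (((hv2.mul hv0).add (hv1.mul hv1)).add ((hv1.mul hv1).add (hv0.mul hv2))))).add (HasDerivAt.const_mul (2 : ℝ) hu4)).add (HasDerivAt.const_mul (-5 / 9 : ℝ) hv4))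

private lemma involHD_Gv (u v : ℝ → ℝ) (hu : ContDiff ℝ (⊤ : ℕ∞) u) (hv : ContDiff ℝ (⊤ : ℕ∞) v) (x : ℝ) :
    HasDerivAt (involGv u v) (involD1v u v x) x := by
  have hu0 : HasDerivAt u (deriv u x) x := by
    have h := involJet hu 0 x
    simpa [iteratedDeriv_zero, iteratedDeriv_one] using h
  have hu1 : HasDerivAt (deriv u) (iteratedDeriv 2 u x) x := by
    have h := involJet hu 1 x
    simpa [iteratedDeriv_one] using h
  have hu2 : HasDerivAt (iteratedDeriv 2 u) (iteratedDeriv 3 u x) x := involJet hu 2 x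
  have hv0 : HasDerivAt v (deriv v x) x := by
    have h := involJet hv 0 x
    simpa [iteratedDeriv_zero, iteratedDeriv_one] using h
  have hv1 : HasDerivAt (deriv v) (iteratedDeriv 2 v x) x := by
    have h := involJet hv 1 x
    simpa [iteratedDeriv_one] using h
  have hv2 : HasDerivAt (iteratedDeriv 2 v) (iteratedDeriv 3 v x) x := involJet hv 2 x
  exact (((((HasDerivAt.const_mul (20 / 9 : ℝ) (hu0.mul hu0)).add (HasDerivAt.const_mul (-10 / 9 : ℝ) (hu0.mul hv0))).add (HasDerivAt.const_mul (7 / 54 : ℝ) (hv0.mul hv0))).add (HasDerivAt.const_mul (-5 / 9 : ℝ) hu2)).add (HasDerivAt.const_mul (4 / 27 : ℝ) hv2))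

private lemma involHD_D1v (u v : ℝ → ℝ) (hu : ContDiff ℝ (⊤ : ℕ∞) u) (hv : ContDiff ℝ (⊤ : ℕ∞) v) (x : ℝ) :
    HasDerivAt (involD1v u v) (involD2v u v x) x := by
  have hu0 : HasDerivAt u (deriv u x) x := by
    have h := involJet hu 0 x
    simpa [iteratedDeriv_zero, iteratedDeriv_one] using h
  have hu1 : HasDerivAt (deriv u) (iteratedDeriv 2 u x) x := by
    have h := involJet hu 1 x
    simpa [iteratedDeriv_one] using h
  have hu2 : HasDerivAt (iteratedDeriv 2 u) (iteratedDeriv 3 u x) x := involJet hu 2 x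
  have hu3 : HasDerivAt (iteratedDeriv 3 u) (iteratedDeriv 4 u x) x := involJet hu 3 x
  have hv0 : HasDerivAt v (deriv v x) x := by
    have h := involJet hv 0 x
    simpa [iteratedDeriv_zero, iteratedDeriv_one] using h
  have hv1 : HasDerivAt (deriv v) (iteratedDeriv 2 v x) x := by
    have h := involJet hv 1 x
    simpa [iteratedDeriv_one] using h
  have hv2 : HasDerivAt (iteratedDeriv 2 v) (iteratedDeriv 3 v x) x := involJet hv 2 x
  have hv3 : HasDerivAt (iteratedDeriv 3 v) (iteratedDeriv 4 v x) x := involJet hv 3 x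
  exact (((((HasDerivAt.const_mul (20 / 9 : ℝ) ((hu1.mul hu0).add (hu0.mul hu1))).add (HasDerivAt.const_mul (-10 / 9 : ℝ) ((hu1.mul hv0).add (hu0.mul hv1)))).add (HasDerivAt.const_mul (7 / 54 : ℝ) ((hv1.mul hv0).add (hv0.mul hv1)))).add (HasDerivAt.const_mul (-5 / 9 : ℝ) hu3)).add (HasDerivAt.const_mul (4 / 27 : ℝ) hv3))

private lemma involHD_D2v (u v : ℝ → ℝ) (hu : ContDiff ℝ (⊤ : ℕ∞) u) (hv : ContDiff ℝ (⊤ : ℕ∞) v) (x : ℝ) :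
    HasDerivAt (involD2v u v) (involD3v u v x) x := by
  have hu0 : HasDerivAt u (deriv u x) x := by
    have h := involJet hu 0 x
    simpa [iteratedDeriv_zero, iteratedDeriv_one] using h
  have hu1 : HasDerivAt (deriv u) (iteratedDeriv 2 u x) x := by
    have h := involJet hu 1 x
    simpa [iteratedDeriv_one] using h
  have hu2 : HasDerivAt (iteratedDeriv 2 u) (iteratedDeriv 3 u x) x := involJet hu 2 x
  have hu3 : HasDerivAt (iteratedDeriv 3 u) (iteratedDeriv 4 u x) x := involJet hu 3 x
  have hu4 : HasDerivAt (iteratedDeriv 4 u) (iteratedDeriv 5 u x) x := involJet hu 4 x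
  have hv0 : HasDerivAt v (deriv v x) x := by
    have h := involJet hv 0 x
    simpa [iteratedDeriv_zero, iteratedDeriv_one] using h
  have hv1 : HasDerivAt (deriv v) (iteratedDeriv 2 v x) x := by
    have h := involJet hv 1 x
    simpa [iteratedDeriv_one] using h
  have hv2 : HasDerivAt (iteratedDeriv 2 v) (iteratedDeriv 3 v x) x := involJet hv 2 x
  have hv3 : HasDerivAt (iteratedDeriv 3 v) (iteratedDeriv 4 v x) x := involJet hv 3 x
  have hv4 : HasDerivAt (iteratedDeriv 4 v) (iteratedDeriv 5 v x) x := involJet hv 4 x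
  exact (((((HasDerivAt.const_mul (20 / 9 : ℝ) (((hu2.mul hu0).add (hu1.mul hu1)).add ((hu1.mul hu1).add (hu0.mul hu2)))).add (HasDerivAt.const_mul (-10 / 9 : ℝ) (((hu2.mul hv0).add (hu1.mul hv1)).add ((hu1.mul hv1).add (hu0.mul hv2))))).add (HasDerivAt.const_mul (7 / 54 : ℝ) (((hv2.mul hv0).add (hv1.mul hv1)).add ((hv1.mul hv1).add (hv0.mul hv2))))).add (HasDerivAt.const_mul (-5 / 9 : ℝ) hu4)).add (HasDerivAt.const_mul (4 / 27 : ℝ) hv4))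

private lemma involHD_FF (u v : ℝ → ℝ) (hu : ContDiff ℝ (⊤ : ℕ∞) u) (hv : ContDiff ℝ (⊤ : ℕ∞) v) (x : ℝ) :
    HasDerivAt (involFF u v) (involDF u v x) x := by
  have hu0 : HasDerivAt u (deriv u x) x := by
    have h := involJet hu 0 x
    simpa [iteratedDeriv_zero, iteratedDeriv_one] using h
  have hu1 : HasDerivAt (deriv u) (iteratedDeriv 2 u x) x := by
    have h := involJet hu 1 x
    simpa [iteratedDeriv_one] using h
  have hu2 : HasDerivAt (iteratedDeriv 2 u) (iteratedDeriv 3 u x) x := involJet hu 2 x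
  have hu3 : HasDerivAt (iteratedDeriv 3 u) (iteratedDeriv 4 u x) x := involJet hu 3 x
  have hu4 : HasDerivAt (iteratedDeriv 4 u) (iteratedDeriv 5 u x) x := involJet hu 4 x
  have hv0 : HasDerivAt v (deriv v x) x := by
    have h := involJet hv 0 x
    simpa [iteratedDeriv_zero, iteratedDeriv_one] using h
  have hv1 : HasDerivAt (deriv v) (iteratedDeriv 2 v x) x := by
    have h := involJet hv 1 x
    simpa [iteratedDeriv_one] using h
  have hv2 : HasDerivAt (iteratedDeriv 2 v) (iteratedDeriv 3 v x) x := involJet hv 2 x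
  have hv3 : HasDerivAt (iteratedDeriv 3 v) (iteratedDeriv 4 v x) x := involJet hv 3 x
  have hv4 : HasDerivAt (iteratedDeriv 4 v) (iteratedDeriv 5 v x) x := involJet hv 4 x
  exact ((((((((((((((((((((((((HasDerivAt.const_mul (7 / 54 : ℝ) (hv2.mul hv2)).add (HasDerivAt.const_mul (-7 / 27 : ℝ) (hv1.mul hv3))).add (HasDerivAt.const_mul (7 / 27 : ℝ) (hv0.mul hv4))).add (HasDerivAt.const_mul (80 / 81 : ℝ) ((hv0.mul hv0).mul hv2))).add (HasDerivAt.const_mul (35 / 162 : ℝ) (((hv0.mul hv0).mul hv0).mul hv0))).add (HasDerivAt.const_mul (-8 / 9 : ℝ) (hu4.mul hv0))).add (HasDerivAt.const_mul (8 / 9 : ℝ) (hu3.mul hv1))).add (HasDerivAt.const_mul (-8 / 9 : ℝ) (hu2.mul hv2))).add (HasDerivAt.const_mul (-100 / 27 : ℝ) ((hu2.mul hv0).mul hv0))).add (HasDerivAt.const_mul (3 / 2 : ℝ) (hu2.mul hu2))).add (HasDerivAt.const_mul (8 / 9 : ℝ) (hu1.mul hv3))).add (HasDerivAt.const_mul (-3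 : ℝ) (hu1.mul hu3))).add (HasDerivAt.const_mul (-10 / 9 : ℝ) ((hu1.mul hu1).mul hv0))).add (HasDerivAt.const_mul (-8 / 9 : ℝ) (hu0.mul hv4))).add (HasDerivAt.const_mul (-65 / 9 : ℝ) ((hu0.mul hv0).mul hv2))).add (HasDerivAt.const_mul (-95 / 27 : ℝ) (((hu0.mul hv0).mul hv0).mul hv0))).add (HasDerivAt.const_mul (3 : ℝ) (hu0.mul hu4))).add (HasDerivAt.const_mul (230 / 9 : ℝ) ((hu0.mul hu2).mul hv0))).add (HasDerivAt.const_mul (10 / 9 : ℝ) ((hu0.mul hu1).mul hv1))).add (HasDerivAt.const_mul (110 / 9 : ℝ) ((hu0.mul hu0).mul hv2))).add (HasDerivAt.const_mul (550 / 27 : ℝ) (((hu0.mul hu0).mul hv0).mul hv0))).add (HasDerivAt.const_mul (-40 : ℝ) ((hu0.mul hu0).mul hu2))).add (HasDerivAt.const_mul (-440 / 9 : ℝ) (((hu0.mul hu0).mul hu0).mul hv0))).add (HasDerivAt.const_mul (40 : ℝ) (((hu0.mul hu0).mul hu0).mul hu0)))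

private lemma involGu_eq (u v : ℝ → ℝ) : dH2u u v = involGu u v :=
  funext fun x => by simp only [dH2u, involGu]; ring

private lemma involGv_eq (u v : ℝ → ℝ) : dH2v u v = involGv u v :=
  funext fun x => by simp only [dH2v, involGv]; ring

private lemma involIter3u (u v : ℝ → ℝ) (hu : ContDiff ℝ (⊤ : ℕ∞) u) (hv : ContDiff ℝ (⊤ : ℕ∞) v) :
    iteratedDeriv 3 (involGu u v) = involD3u u v := by
  have h1 : deriv (involGu u v) = involD1u u v := funext fun x => (involHD_Gu u v hu hv x).deriv
  have h2 : deriv (involD1u u v) = involD2u u v := funext fun x => (involHD_D1u u v hu hv x).deriv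
  have h3 : deriv (involD2u u v) = involD3u u v := funext fun x => (involHD_D2u u v hu hv x).deriv
  rw [show (3 : ℕ) = 2 + 1 from rfl, iteratedDeriv_succ,
    show (2 : ℕ) = 1 + 1 from rfl, iteratedDeriv_succ, iteratedDeriv_one, h1, h2, h3]

private lemma involIter3v (u v : ℝ → ℝ) (hu : ContDiff ℝ (⊤ : ℕ∞) u) (hv : ContDiff ℝ (⊤ : ℕ∞) v) :
    iteratedDeriv 3 (involGv u v) = involD3v u v := by
  have h1 : deriv (involGv u v) = involD1v u v := funext fun x => (involHD_Gv u v hu hv x).deriv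
  have h2 : deriv (involD1v u v) = involD2v u v := funext fun x => (involHD_D1v u v hu hv x).deriv
  have h3 : deriv (involD2v u v) = involD3v u v := funext fun x => (involHD_D2v u v hu hv x).deriv
  rw [show (3 : ℕ) = 2 + 1 from rfl, iteratedDeriv_succ,
    show (2 : ℕ) = 1 + 1 from rfl, iteratedDeriv_succ, iteratedDeriv_one, h1, h2, h3]


private lemma involFFsupp (u v : ℝ → ℝ) (huc : HasCompactSupport u) (hvc : HasCompactSupport v) :
    HasCompactSupport (involFF u v) := by
  have hsub : tsupport (involFF u v) ⊆ tsupport u ∪ tsupport v := by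
    apply closure_minimal _ ((isClosed_tsupport u).union (isClosed_tsupport v))
    intro x hx
    by_contra hmem
    simp only [Set.mem_union, not_or] at hmem
    obtain ⟨hux, hvx⟩ := hmem
    apply hx
    have zu0 : u x = 0 := image_eq_zero_of_notMem_tsupport hux
    have zu1 : deriv u x = 0 := by
      have := involJetZero hux 1
      simpa [iteratedDeriv_one] using this
    have zu2 : iteratedDeriv 2 u x = 0 := involJetZero hux 2
    have zu3 : iteratedDeriv 3 u x = 0 := involJetZero hux 3
    have zu4 : iteratedDeriv 4 u x = 0 := involJetZero hux 4
    have zv0 : v x = 0 := image_eq_zero_of_notMem_tsupport hvx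
    have zv1 : deriv v x = 0 := by
      have := involJetZero hvx 1
      simpa [iteratedDeriv_one] using this
    have zv2 : iteratedDeriv 2 v x = 0 := involJetZero hvx 2
    have zv3 : iteratedDeriv 3 v x = 0 := involJetZero hvx 3
    have zv4 : iteratedDeriv 4 v x = 0 := involJetZero hvx 4
    simp [involFF, zu0, zu1, zu2, zu3, zu4, zv0, zv1, zv2, zv3, zv4]
  exact IsCompact.of_isClosed_subset (huc.union hvc) isClosed_closure hsub


private lemma involDFcont (u v : ℝ → ℝ) (hu : ContDiff ℝ (⊤ : ℕ∞) u) (hv : ContDiff ℝ (⊤ : ℕ∞) v) :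
    Continuous (involDF u v) := by
  have cu0 : Continuous u := hu.continuous
  have cu1 : Continuous (deriv u) := by
    have := hu.continuous_iteratedDeriv 1 (by simp)
    simpa [iteratedDeriv_one] using this
  have cu2 : Continuous (iteratedDeriv 2 u) := hu.continuous_iteratedDeriv 2 (WithTop.coe_le_coe.2 le_top)
  have cu3 : Continuous (iteratedDeriv 3 u) := hu.continuous_iteratedDeriv 3 (WithTop.coe_le_coe.2 le_top)
  have cu4 : Continuous (iteratedDeriv 4 u) := hu.continuous_iteratedDeriv 4 (WithTop.coe_le_coe.2 le_top)
  have cu5 : Continuous (iteratedDeriv 5 u) := hu.continuous_iteratedDeriv 5 (WithTop.coe_le_coe.2 le_top)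
  have cv0 : Continuous v := hv.continuous
  have cv1 : Continuous (deriv v) := by
    have := hv.continuous_iteratedDeriv 1 (by simp)
    simpa [iteratedDeriv_one] using this
  have cv2 : Continuous (iteratedDeriv 2 v) := hv.continuous_iteratedDeriv 2 (WithTop.coe_le_coe.2 le_top)
  have cv3 : Continuous (iteratedDeriv 3 v) := hv.continuous_iteratedDeriv 3 (WithTop.coe_le_coe.2 le_top)
  have cv4 : Continuous (iteratedDeriv 4 v) := hv.continuous_iteratedDeriv 4 (WithTop.coe_le_coe.2 le_top)
  have cv5 : Continuous (iteratedDeriv 5 v) := hv.continuous_iteratedDeriv 5 (WithTop.coe_le_coe.2 le_top)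
  exact ((((((((((((((((((((((((continuous_const.mul ((cv3.mul cv2).add (cv2.mul cv3))).add (continuous_const.mul ((cv2.mul cv3).add (cv1.mul cv4)))).add (continuous_const.mul ((cv1.mul cv4).add (cv0.mul cv5)))).add (continuous_const.mul ((((cv1.mul cv0).add (cv0.mul cv1)).mul cv2).add ((cv0.mul cv0).mul cv3)))).add (continuous_const.mul ((((((cv1.mul cv0).add (cv0.mul cv1)).mul cv0).add ((cv0.mul cv0).mul cv1)).mul cv0).add (((cv0.mul cv0).mul cv0).mul cv1)))).add (continuous_const.mul ((cu5.mul cv0).add (cu4.mul cv1)))).add (continuous_const.mul ((cu4.mul cv1).add (cu3.mul cv2)))).add (continuous_const.mul ((cu3.mul cv2).add (cu2.mul cv3)))).add (continuous_const.mul ((((cu3.mul cv0).add (cu2.mul cv1)).mul cv0).add ((cu2.mul cv0).mul cv1)))).add (continuous_const.mul ((cu3.mul cu2).add (cu2.mul cu3)))).add (continuous_const.mul ((cu2.mul cv3).add (cu1.mul cv4)))).add (continuous_const.mul ((cu2.mul cu3).add (cu1.mul cu4)))).add (continuous_const.mul ((((cu2.mul cu1).add (cu1.mul cu2)).mul cv0).add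 ((cu1.mul cu1).mul cv1)))).add (continuous_const.mul ((cu1.mul cv4).add (cu0.mul cv5)))).add (continuous_const.mul ((((cu1.mul cv0).add (cu0.mul cv1)).mul cv2).add ((cu0.mul cv0).mul cv3)))).add (continuous_const.mul ((((((cu1.mul cv0).add (cu0.mul cv1)).mul cv0).add ((cu0.mul cv0).mul cv1)).mul cv0).add (((cu0.mul cv0).mul cv0).mul cv1)))).add (continuous_const.mul ((cu1.mul cu4).add (cu0.mul cu5)))).add (continuous_const.mul ((((cu1.mul cu2).add (cu0.mul cu3)).mul cv0).add ((cu0.mul cu2).mul cv1)))).add (continuous_const.mul ((((cu1.mul cu1).add (cu0.mul cu2)).mul cv1).add ((cu0.mul cu1).mul cv2)))).add (continuous_const.mul ((((cu1.mul cu0).add (cu0.mul cu1)).mul cv2).add ((cu0.mul cu0).mul cv3)))).add (continuous_const.mul ((((((cu1.mul cu0).add (cu0.mul cu1)).mul cv0).add ((cu0.mul cu0).mul cv1)).mul cv0).add (((cu0.mul cu0).mul cv0).mul cv1)))).add (continuous_const.mul ((((cu1.mul cu0).add (cu0.mul cu1)).mul cu2).add ((cu0.mul cu0).mul cu3)))).add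 (continuous_const.mul ((((((cu1.mul cu0).add (cu0.mul cu1)).mul cu0).add ((cu0.mul cu0).mul cu1)).mul cv0).add (((cu0.mul cu0).mul cu0).mul cv1)))).add (continuous_const.mul ((((((cu1.mul cu0).add (cu0.mul cu1)).mul cu0).add ((cu0.mul cu0).mul cu1)).mul cu0).add (((cu0.mul cu0).mul cu0).mul cu1))))


private lemma involIntZero (F F' : ℝ → ℝ) (hF : ∀ x, HasDerivAt F (F' x) x)
    (hc : HasCompactSupport F) (hcont : Continuous F') : ∫ x : ℝ, F' x = 0 := by
  obtain ⟨r, hr⟩ := hc.isBounded.subset_closedBall 0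
  have hsub : tsupport F ⊆ Set.Icc (-(|r| + 1)) (|r| + 1) := by
    intro y hy
    have h := hr hy
    rw [Real.closedBall_eq_Icc] at h
    obtain ⟨h1, h2⟩ := h
    constructor
    · nlinarith [le_abs_self r, neg_abs_le r]
    · nlinarith [le_abs_self r, neg_abs_le r]
  have hF'zero : ∀ y, y ∉ Set.Ioc (-(|r| + 2)) (|r| + 2) → F' y = 0 := by
    intro y hy
    by_contra hne
    have h1 : y ∈ tsupport F := by
      apply support_deriv_subset
      show deriv F y ≠ 0
      rw [(hF y).deriv]
      exact hne
    have h2 := hsub h1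
    obtain ⟨h3, h4⟩ := h2
    exact hy ⟨by linarith, by linarith⟩
  have h1 : (∫ x : ℝ, F' x) = ∫ x in Set.Ioc (-(|r| + 2)) (|r| + 2), F' x :=
    (setIntegral_eq_integral_of_forall_compl_eq_zero hF'zero).symm
  have hab : -(|r| + 2) ≤ |r| + 2 := by nlinarith [abs_nonneg r]
  rw [h1, ← intervalIntegral.integral_of_le hab,
    intervalIntegral.integral_eq_sub_of_hasDerivAt (fun y _ => hF y)
      ((hcont.intervalIntegrable _ _))]
  have hFa : F (-(|r| + 2)) = 0 := by
    apply image_eq_zero_of_notMem_tsupport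
    intro h
    obtain ⟨h3, h4⟩ := hsub h
    linarith
  have hFb : F (|r| + 2) = 0 := by
    apply image_eq_zero_of_notMem_tsupport
    intro h
    obtain ⟨h3, h4⟩ := hsub h
    linarith
  rw [hFa, hFb]
  ring


/-- For compactly supported smooth `u, v`, the Poisson bracket
`{ℋ₁, ℋ₂} = ∫ (δH₁/δu, δH₁/δv)·𝔓₀(δH₂/δu, δH₂/δv) dx` associated with 𝔓₀ vanishes:
`ℋ₁` and `ℋ₂` are in involution with respect to 𝔓₀. -/
theorem H1_H2_in_involution (u v : ℝ → ℝ)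
    (hu : ContDiff ℝ (⊤ : ℕ∞) u) (hv : ContDiff ℝ (⊤ : ℕ∞) v)
    (huc : HasCompactSupport u) (hvc : HasCompactSupport v) :
    ∫ x : ℝ,
      ((4 * u x - v x) * P0fst u (dH2u u v) x
        + (-u x + (2 / 9) * v x) * P0snd v (dH2v u v) x) = 0 := by
  have hGu := involGu_eq u v
  have hGv := involGv_eq u v
  have hD1u : deriv (involGu u v) = involD1u u v := funext fun x => (involHD_Gu u v hu hv x).deriv
  have hD1v : deriv (involGv u v) = involD1v u v := funext fun x => (involHD_Gv u v hu hv x).deriv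
  have h3u := involIter3u u v hu hv
  have h3v := involIter3v u v hu hv
  have key : ∀ x : ℝ, (4 * u x - v x) * P0fst u (dH2u u v) x
      + (-u x + (2 / 9) * v x) * P0snd v (dH2v u v) x = involDF u v x := by
    intro x
    simp only [P0fst, P0snd, hGu, hGv, h3u, h3v, hD1u, hD1v, involGu, involGv, involD1u,
      involD1v, involD3u, involD3v, involDF]
    ring
  simp only [key]
  exact involIntZero (involFF u v) (involDF u v) (fun x => involHD_FF u v hu hv x)
    (involFFsupp u v huc hvc) (involDFcont u v hu hv)
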